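/- arXiv:2401.00166 — 2 statements merged into one kernel-verified Lean document; each statement's English description precedes it below -/
import Mathlib

section
/- Fix a slot i and a power budget p > 0. Suppose x* is an optimal solution of the PM-SLP problem in slot i (minimize ‖x‖² over {x ∈ ℂ^{N_t} : CI_i(x, 1)}) and let p* := ‖x*‖² with p* > 0. Then the pair (√(p/p*)·x*, √(p/p*)) is an optimal solution of the SB-SLP problem in slot i: it satisfies CI_i(√(p/p*)·x*, √(p/p*)) and ‖√(p/p*)·x*‖² ≤ p, and every pair (x, t) with CI_i(x, t) and ‖x‖² ≤ p satisfies t ≤ √(p/p*). -/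
open scoped BigOperators

/-- The constructive-interference (CI) constraint in a given symbol slot:
`CI Nt Nr M h s γ σ x t` holds iff for every user `k`,
`Re((h_kᵀ x)/s_k) − |Im((h_kᵀ x)/s_k)| / tan(π/M) ≥ t·√(γ_k)·σ`. -/
noncomputable def CI (Nt Nr M : ℕ) (h : Fin Nr → Fin Nt → ℂ)
    (s : Fin Nr → ℂ) (γ : Fin Nr → ℝ) (σ : ℝ)
    (x : Fin Nt → ℂ) (t : ℝ) : Prop :=
  ∀ k : Fin Nr,
    ((∑ j, h k j * x j) / s k).re -
        |((∑ j, h k j * x j) / s k).im| / Real.tan (Real.pi / M) ≥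
      t * Real.sqrt (γ k) * σ

/-! Both sides of the CI constraint are positively homogeneous of degree one in `(x, t)` and the
power is homogeneous of degree two. Scaling the PM-SLP optimum by `√(p/p*)` exhausts the budget
`p`; conversely, a point with margin `t > 0` and power at most `p` rescales by `t⁻¹` to a PM-SLP
feasible point of power at most `p / t²`, so `p* ≤ p / t²` by optimality of `x*`. -/

theorem sum_sq_norm_smul {ι 𝕜 E : Type*} [Fintype ι] [NormedField 𝕜]
    [SeminormedAddCommGroup E] [NormedSpace 𝕜 E] (c : 𝕜) (x : ι → E) :
    ∑ j, ‖(c • x) j‖ ^ 2 = ‖c‖ ^ 2 * ∑ j, ‖x j‖ ^ 2 := by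
  simp only [Pi.smul_apply, norm_smul, mul_pow, Finset.mul_sum]

theorem re_sub_abs_im_div_ofReal_mul {c : ℝ} (hc : 0 ≤ c) (z : ℂ) (T : ℝ) :
    (c * z).re - |(c * z).im| / T = c * (z.re - |z.im| / T) := by
  rw [Complex.re_ofReal_mul, Complex.im_ofReal_mul, abs_mul, abs_of_nonneg hc]
  ring

theorem CI.smul {Nt Nr M : ℕ} {h : Fin Nr → Fin Nt → ℂ} {s : Fin Nr → ℂ} {γ : Fin Nr → ℝ}
    {σ : ℝ} {x : Fin Nt → ℂ} {t : ℝ} (hx : CI Nt Nr M h s γ σ x t) {c : ℝ} (hc : 0 ≤ c) :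
    CI Nt Nr M h s γ σ (c • x) (c * t) := by
  intro k
  have hsum : ∑ j, h k j * (c • x) j = c * ∑ j, h k j * x j := by
    simp only [Pi.smul_apply, Complex.real_smul, Finset.mul_sum, mul_left_comm]
  rw [hsum, mul_div_assoc, re_sub_abs_im_div_ofReal_mul hc]
  have := mul_le_mul_of_nonneg_left (hx k) hc
  linarith

theorem stmt3_general (Nt Nr Ns M : ℕ)
    (h : Fin Nr → Fin Nt → ℂ)
    (s : Fin Nr → Fin Ns → ℂ)
    (γ : Fin Nr → Fin Ns → ℝ)
    (σ : ℝ)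
    (i : Fin Ns) (p : ℝ) (hp : 0 < p)
    (xstar : Fin Nt → ℂ)
    (hfeas : CI Nt Nr M h (fun k => s k i) (fun k => γ k i) σ xstar 1)
    (hopt : ∀ y : Fin Nt → ℂ,
      CI Nt Nr M h (fun k => s k i) (fun k => γ k i) σ y 1 →
      ∑ j, ‖xstar j‖ ^ 2 ≤ ∑ j, ‖y j‖ ^ 2)
    (pstar : ℝ) (hpstar : pstar = ∑ j, ‖xstar j‖ ^ 2) (hpstar0 : 0 < pstar) :
    CI Nt Nr M h (fun k => s k i) (fun k => γ k i) σ
        (Real.sqrt (p / pstar) • xstar) (Real.sqrt (p / pstar)) ∧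
    (∑ j, ‖(Real.sqrt (p / pstar) • xstar) j‖ ^ 2 ≤ p) ∧
    (∀ (x : Fin Nt → ℂ) (t : ℝ),
      CI Nt Nr M h (fun k => s k i) (fun k => γ k i) σ x t →
      (∑ j, ‖x j‖ ^ 2 ≤ p) → t ≤ Real.sqrt (p / pstar)) := by
  refine ⟨by simpa using hfeas.smul (Real.sqrt_nonneg (p / pstar)), ?_, ?_⟩
  · rw [sum_sq_norm_smul, Real.norm_eq_abs, sq_abs, Real.sq_sqrt (div_pos hp hpstar0).le,
      ← hpstar, div_mul_cancel₀ _ hpstar0.ne']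
  · intro x t hx hxp
    rcases le_or_gt t 0 with ht | ht
    · exact ht.trans (Real.sqrt_nonneg _)
    have hunit := hx.smul (inv_nonneg.mpr ht.le)
    rw [inv_mul_cancel₀ ht.ne'] at hunit
    have hmin := hopt _ hunit
    rw [sum_sq_norm_smul, Real.norm_eq_abs, sq_abs, ← hpstar] at hmin
    refine (le_abs_self t).trans (Real.abs_le_sqrt ?_)
    rw [le_div_iff₀ hpstar0]
    calc t ^ 2 * pstar ≤ t ^ 2 * (t⁻¹ ^ 2 * ∑ j, ‖x j‖ ^ 2) := by gcongr
      _ = ∑ j, ‖x j‖ ^ 2 := by field_simp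
      _ ≤ p := hxp

/-- PM-SLP optimum `x*` with value `p* = ‖x*‖² > 0` yields the SB-SLP optimum
`(√(p/p*)·x*, √(p/p*))` for power budget `p > 0`. -/
theorem stmt3 (Nt Nr Ns M : ℕ) (hNt : 0 < Nt) (hNr : 0 < Nr) (hNs : 0 < Ns)
    (hM : 3 ≤ M)
    (h : Fin Nr → Fin Nt → ℂ)
    (s : Fin Nr → Fin Ns → ℂ) (hs : ∀ k i, s k i ≠ 0)
    (γ : Fin Nr → Fin Ns → ℝ) (hγ : ∀ k i, 0 ≤ γ k i)
    (σ : ℝ) (hσ : 0 < σ)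
    (i : Fin Ns) (p : ℝ) (hp : 0 < p)
    (xstar : Fin Nt → ℂ)
    (hfeas : CI Nt Nr M h (fun k => s k i) (fun k => γ k i) σ xstar 1)
    (hopt : ∀ y : Fin Nt → ℂ,
      CI Nt Nr M h (fun k => s k i) (fun k => γ k i) σ y 1 →
      ∑ j, ‖xstar j‖ ^ 2 ≤ ∑ j, ‖y j‖ ^ 2)
    (pstar : ℝ) (hpstar : pstar = ∑ j, ‖xstar j‖ ^ 2) (hpstar0 : 0 < pstar) :
    CI Nt Nr M h (fun k => s k i) (fun k => γ k i) σ
        (Real.sqrt (p / pstar) • xstar) (Real.sqrt (p / pstar)) ∧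
    (∑ j, ‖(Real.sqrt (p / pstar) • xstar) j‖ ^ 2 ≤ p) ∧
    (∀ (x : Fin Nt → ℂ) (t : ℝ),
      CI Nt Nr M h (fun k => s k i) (fun k => γ k i) σ x t →
      (∑ j, ‖x j‖ ^ 2 ≤ p) → t ≤ Real.sqrt (p / pstar)) :=
  stmt3_general Nt Nr Ns M h s γ σ i p hp xstar hfeas hopt pstar hpstar hpstar0
end

section
/- Let P > 0. Suppose (x_1^{PM},…,x_{N_s}^{PM}) is an optimal solution of the block-level PM slot-variant problem (minimize ∑_{i=1}^{N_s} ‖x_i‖² subject to CI_i(x_i, 1) for all i), and let P^{PM} := ∑_{i=1}^{N_s} ‖x_i^{PM}‖² with P^{PM} > 0. Then the tuple (√(P/P^{PM})·x_1^{PM}, …, √(P/P^{PM})·x_{N_s}^{PM}, √(P/P^{PM})) is an optimal solution of the block-level SB slot-variant problem: it satisfies CI_i(√(P/P^{PM})·x_i^{PM}, √(P/P^{PM})) for all i and ∑_i ‖√(P/P^{PM})·x_i^{PM}‖² ≤ P, and every tuple (x_1,…,x_{N_s}, t) with CI_i(x_i, t) for all i and ∑_i ‖x_i‖² ≤ P satisfies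 t ≤ √(P/P^{PM}). -/
/-!
The CI constraint is positively homogeneous: scaling the precoder by `c ≥ 0` scales the
achievable margin `t` by `c`, while the transmit power scales by `c²`. Hence a feasible
SB tuple `(x, t)` with `t > 0` gives the PM-feasible precoder `t⁻¹ • x`, so optimality of
`x^{PM}` yields `P^{PM} ≤ t⁻² P`, i.e. `t ≤ √(P / P^{PM})`; conversely, scaling `x^{PM}` by
`√(P / P^{PM})` attains this margin with power exactly `P`.
-/

open scoped BigOperators

namespace CI

variable {Nt Nr M : ℕ} {h : Fin Nr → Fin Nt → ℂ} {s : Fin Nr → ℂ} {γ : Fin Nr → ℝ} {σ : ℝ}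
  {x : Fin Nt → ℂ} {t : ℝ}

theorem smul_s5 (hx : CI Nt Nr M h s γ σ x t) {c : ℝ} (hc : 0 ≤ c) :
    CI Nt Nr M h s γ σ (c • x) (c * t) := by
  intro k
  set z := (∑ j, h k j * x j) / s k
  have hlin : (∑ j, h k j * (c • x) j) / s k = c * z := by
    simp only [z, Pi.smul_apply, Complex.real_smul, mul_left_comm _ (c : ℂ), ← Finset.mul_sum,
      mul_div_assoc]
  rw [hlin, Complex.re_ofReal_mul, Complex.im_ofReal_mul, abs_mul, abs_of_nonneg hc]
  calc c * t * √(γ k) * σ = c * (t * √(γ k) * σ) := by ring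
    _ ≤ c * (z.re - |z.im| / Real.tan (Real.pi / M)) := mul_le_mul_of_nonneg_left (hx k) hc
    _ = c * z.re - c * |z.im| / Real.tan (Real.pi / M) := by ring

theorem inv_smul_one (hx : CI Nt Nr M h s γ σ x t) (ht : 0 < t) :
    CI Nt Nr M h s γ σ (t⁻¹ • x) 1 := by
  simpa [inv_mul_cancel₀ ht.ne'] using hx.smul_s5 (inv_nonneg.2 ht.le)

end CI

theorem sum_sum_norm_smul_sq {ι κ E : Type*} [Fintype ι] [Fintype κ] [SeminormedAddCommGroup E]
    [NormedSpace ℝ E] (c : ℝ) (x : ι → κ → E) :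
    ∑ i, ∑ j, ‖(c • x i) j‖ ^ 2 = c ^ 2 * ∑ i, ∑ j, ‖x i j‖ ^ 2 := by
  simp only [Pi.smul_apply, norm_smul, mul_pow, Real.norm_eq_abs, sq_abs, Finset.mul_sum]

theorem stmt5_general (Nt Nr Ns M : ℕ)
    (h : Fin Nr → Fin Nt → ℂ)
    (s : Fin Nr → Fin Ns → ℂ)
    (γ : Fin Nr → Fin Ns → ℝ)
    (σ : ℝ)
    (P : ℝ) (hP : 0 < P)
    (xPM : Fin Ns → Fin Nt → ℂ)
    (hfeas : ∀ i, CI Nt Nr M h (fun k => s k i) (fun k => γ k i) σ (xPM i) 1)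
    (hopt : ∀ y : Fin Ns → Fin Nt → ℂ,
      (∀ i, CI Nt Nr M h (fun k => s k i) (fun k => γ k i) σ (y i) 1) →
      ∑ i, ∑ j, ‖xPM i j‖ ^ 2 ≤ ∑ i, ∑ j, ‖y i j‖ ^ 2)
    (PPM : ℝ) (hPPM : PPM = ∑ i, ∑ j, ‖xPM i j‖ ^ 2) (hPPM0 : 0 < PPM) :
    (∀ i, CI Nt Nr M h (fun k => s k i) (fun k => γ k i) σ
        (Real.sqrt (P / PPM) • xPM i) (Real.sqrt (P / PPM))) ∧
    (∑ i, ∑ j, ‖(Real.sqrt (P / PPM) • xPM i) j‖ ^ 2 ≤ P) ∧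
    (∀ (x : Fin Ns → Fin Nt → ℂ) (t : ℝ),
      (∀ i, CI Nt Nr M h (fun k => s k i) (fun k => γ k i) σ (x i) t) →
      (∑ i, ∑ j, ‖x i j‖ ^ 2 ≤ P) → t ≤ Real.sqrt (P / PPM)) := by
  refine ⟨fun i => by simpa using (hfeas i).smul_s5 (Real.sqrt_nonneg (P / PPM)), ?_, ?_⟩
  · rw [sum_sum_norm_smul_sq, ← hPPM, Real.sq_sqrt (by positivity), div_mul_cancel₀ P hPPM0.ne']
  · intro x t hx hpow
    rcases le_or_gt t 0 with ht | ht
    · exact ht.trans (Real.sqrt_nonneg _)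
    have hPPM_le : PPM ≤ t⁻¹ ^ 2 * P :=
      calc PPM ≤ ∑ i, ∑ j, ‖(t⁻¹ • x i) j‖ ^ 2 := by
            rw [hPPM]; exact hopt _ fun i => (hx i).inv_smul_one ht
        _ = t⁻¹ ^ 2 * ∑ i, ∑ j, ‖x i j‖ ^ 2 := sum_sum_norm_smul_sq _ _
        _ ≤ t⁻¹ ^ 2 * P := by gcongr
    rw [Real.le_sqrt' ht, le_div_iff₀ hPPM0]
    calc t ^ 2 * PPM ≤ t ^ 2 * (t⁻¹ ^ 2 * P) := by gcongr
      _ = P := by field_simp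

/-- A block-level PM slot-variant optimum with total power `P^{PM} > 0` yields,
after scaling by `√(P/P^{PM})`, a block-level SB slot-variant optimum for budget `P`. -/
theorem stmt5 (Nt Nr Ns M : ℕ) (hNt : 0 < Nt) (hNr : 0 < Nr) (hNs : 0 < Ns)
    (hM : 3 ≤ M)
    (h : Fin Nr → Fin Nt → ℂ)
    (s : Fin Nr → Fin Ns → ℂ) (hs : ∀ k i, s k i ≠ 0)
    (γ : Fin Nr → Fin Ns → ℝ) (hγ : ∀ k i, 0 ≤ γ k i)
    (σ : ℝ) (hσ : 0 < σ)
    (P : ℝ) (hP : 0 < P)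
    (xPM : Fin Ns → Fin Nt → ℂ)
    (hfeas : ∀ i, CI Nt Nr M h (fun k => s k i) (fun k => γ k i) σ (xPM i) 1)
    (hopt : ∀ y : Fin Ns → Fin Nt → ℂ,
      (∀ i, CI Nt Nr M h (fun k => s k i) (fun k => γ k i) σ (y i) 1) →
      ∑ i, ∑ j, ‖xPM i j‖ ^ 2 ≤ ∑ i, ∑ j, ‖y i j‖ ^ 2)
    (PPM : ℝ) (hPPM : PPM = ∑ i, ∑ j, ‖xPM i j‖ ^ 2) (hPPM0 : 0 < PPM) :
    (∀ i, CI Nt Nr M h (fun k => s k i) (fun k => γ k i) σ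
        (Real.sqrt (P / PPM) • xPM i) (Real.sqrt (P / PPM))) ∧
    (∑ i, ∑ j, ‖(Real.sqrt (P / PPM) • xPM i) j‖ ^ 2 ≤ P) ∧
    (∀ (x : Fin Ns → Fin Nt → ℂ) (t : ℝ),
      (∀ i, CI Nt Nr M h (fun k => s k i) (fun k => γ k i) σ (x i) t) →
      (∑ i, ∑ j, ‖x i j‖ ^ 2 ≤ P) → t ≤ Real.sqrt (P / PPM)) :=
  stmt5_general Nt Nr Ns M h s γ σ P hP xPM hfeas hopt PPM hPPM hPPM0
end
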